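/- arXiv:2602.18918 — 5 statements merged into one kernel-verified Lean document; each statement's English description precedes it below -/
import Mathlib

section
/- Let α,β,γ,δ ∈ ℝ and λ ∈ ℂ with λ ∉ ℝ. If (λ−α)(λ−β)(λ−γ)(λ−δ) = (1−α)(1−β)(1−γ)(1−δ) and α,β,γ,δ ∈ [0,1), then λ is an eigenvalue of the 4×4 matrix A(α,β,γ,δ) with rows (α,1−α,0,0), (0,β,1−β,0), (0,0,γ,1−γ), (1−δ,0,0,δ). -/
open Matrix

/-- The 4×4 row-stochastic "4-cycle" matrix, viewed as a complex matrix. -/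
def cycMat (α β γ δ : ℝ) : Matrix (Fin 4) (Fin 4) ℂ :=
  !![(α : ℂ), 1 - α, 0, 0;
     0, (β : ℂ), 1 - β, 0;
     0, 0, (γ : ℂ), 1 - γ;
     1 - δ, 0, 0, (δ : ℂ)]

theorem one_sub_ofReal_ne_zero {x : ℝ} (hx : x < 1) : (1 : ℂ) - x ≠ 0 :=
  sub_ne_zero.2 (mod_cast hx.ne')

theorem cycMat_mulVec (α β γ δ : ℝ) (v : Fin 4 → ℂ) :
    cycMat α β γ δ *ᵥ v =
      ![α * v 0 + (1 - α) * v 1, β * v 1 + (1 - β) * v 2,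
        γ * v 2 + (1 - γ) * v 3, (1 - δ) * v 0 + δ * v 3] := by
  ext i
  fin_cases i <;> simp [cycMat, mulVec, dotProduct, Fin.sum_univ_four]

/-- Solving the first three rows of `cycMat α β γ δ *ᵥ v = lam • v` one after the other,
starting from `v 0 = 1`. -/
noncomputable def cycEigenvector (α β γ lam : ℂ) : Fin 4 → ℂ :=
  ![1, (lam - α) / (1 - α), (lam - α) * (lam - β) / ((1 - α) * (1 - β)),
    (lam - α) * (lam - β) * (lam - γ) / ((1 - α) * (1 - β) * (1 - γ))]

theorem cycEigenvector_ne_zero (α β γ lam : ℂ) : cycEigenvector α β γ lam ≠ 0 :=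
  fun h => one_ne_zero (congrFun h 0)

/-- The last row closes up exactly under the product identity. -/
theorem cycMat_mulVec_cycEigenvector {α β γ δ : ℝ} {lam : ℂ}
    (hα : (1 : ℂ) - α ≠ 0) (hβ : (1 : ℂ) - β ≠ 0) (hγ : (1 : ℂ) - γ ≠ 0)
    (hprod : (lam - α) * (lam - β) * (lam - γ) * (lam - δ)
      = (1 - α) * (1 - β) * (1 - γ) * (1 - δ)) :
    cycMat α β γ δ *ᵥ cycEigenvector α β γ lam = lam • cycEigenvector α β γ lam := by
  rw [cycMat_mulVec]
  ext i
  fin_cases i <;>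
    simp only [cycEigenvector, Fin.isValue, Fin.zero_eta, Fin.mk_one, Fin.reduceFinMk,
      cons_val_zero, cons_val_one, cons_val, mul_one, Pi.smul_apply, smul_eq_mul] <;>
    field_simp
  · ring
  · ring
  · ring
  · linear_combination -hprod

theorem stmt_2_general (α β γ δ : ℝ)
    (hα : α ∈ Set.Ico (0:ℝ) 1) (hβ : β ∈ Set.Ico (0:ℝ) 1)
    (hγ : γ ∈ Set.Ico (0:ℝ) 1)
    (lam : ℂ)
    (hprod : (lam - α) * (lam - β) * (lam - γ) * (lam - δ)
      = (1 - α) * (1 - β) * (1 - γ) * (1 - δ)) :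
    ∃ v : Fin 4 → ℂ, v ≠ 0 ∧ (cycMat α β γ δ).mulVec v = lam • v :=
  ⟨cycEigenvector α β γ lam, cycEigenvector_ne_zero α β γ lam,
    cycMat_mulVec_cycEigenvector (one_sub_ofReal_ne_zero hα.2) (one_sub_ofReal_ne_zero hβ.2)
      (one_sub_ofReal_ne_zero hγ.2) hprod⟩

theorem stmt_2 (α β γ δ : ℝ)
    (hα : α ∈ Set.Ico (0:ℝ) 1) (hβ : β ∈ Set.Ico (0:ℝ) 1)
    (hγ : γ ∈ Set.Ico (0:ℝ) 1) (hδ : δ ∈ Set.Ico (0:ℝ) 1)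
    (lam : ℂ) (hlam : lam.im ≠ 0)
    (hprod : (lam - α) * (lam - β) * (lam - γ) * (lam - δ)
      = (1 - α) * (1 - β) * (1 - γ) * (1 - δ)) :
    ∃ v : Fin 4 → ℂ, v ≠ 0 ∧ (cycMat α β γ δ).mulVec v = lam • v :=
  stmt_2_general α β γ δ hα hβ hγ lam hprod
end

section
/- Let m, M, U ∈ ℝ with m ≤ π/2, 3m + M > 2π, and U := 2π − 3m. Let F : [m, M) → ℝ be strictly convex. Then U ∈ [m, M) and for all u₁ ≥ u₂ ≥ u₃ ≥ u₄ in [m,M) with u₁+u₂+u₃+u₄ = 2π, one has F(u₁)+F(u₂)+F(u₃)+F(u₄) ≤ 3F(m) + F(U), with equality iff (u₁,u₂,u₃,u₄) = (U,m,m,m). -/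
open Real

lemma key_transfer {S : Set ℝ} {F : ℝ → ℝ} (hF : StrictConvexOn ℝ S F)
    {p q a b : ℝ} (hp : p ∈ S) (hq : q ∈ S) (hpa : p ≤ a) (hab : a ≤ b)
    (hbq : b ≤ q) (hsum : a + b = p + q) :
    F a + F b ≤ F p + F q ∧ (F a + F b = F p + F q → a = p) := by
  rcases eq_or_lt_of_le hpa with h | h
  · have hb : b = q := by linarith
    subst h; subst hb
    exact ⟨le_refl _, fun _ => rfl⟩
  · -- p < a, so strict inequality
    have hpq : p < q := by linarith
    have haq : a < q := by linarith
    set t : ℝ := (q - a) / (q - p) with ht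
    have hqp : (0:ℝ) < q - p := by linarith
    have ht0 : 0 < t := div_pos (by linarith) hqp
    have ht1 : t < 1 := (div_lt_one hqp).mpr (by linarith)
    have hsum1 : t + (1 - t) = 1 := by ring
    have ha' : a = t * p + (1 - t) * q := by
      rw [ht]; field_simp [ne_of_gt hqp]; ring
    have hb' : b = (1 - t) * p + t * q := by
      have : b = p + q - a := by linarith
      rw [this, ha']; ring
    have h1 : F a < t * F p + (1 - t) * F q := by
      have := hF.2 hp hq (ne_of_lt hpq) ht0 (by linarith) hsum1
      simpa [smul_eq_mul, ← ha'] using this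
    have h2 : F b ≤ (1 - t) * F p + t * F q := by
      have := hF.convexOn.2 hp hq (by linarith : (0:ℝ) ≤ 1 - t) (le_of_lt ht0) (by ring)
      simpa [smul_eq_mul, ← hb'] using this
    have hlt : F a + F b < F p + F q := by nlinarith
    exact ⟨le_of_lt hlt, fun heq => absurd heq (ne_of_lt hlt)⟩

theorem stmt_12 (m M U : ℝ) (hm : m ≤ π / 2) (htight : 2 * π < 3 * m + M)
    (hU : U = 2 * π - 3 * m)
    (F : ℝ → ℝ) (hF : StrictConvexOn ℝ (Set.Ico m M) F) :
    U ∈ Set.Ico m M ∧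
    ∀ u₁ u₂ u₃ u₄ : ℝ, u₁ ≥ u₂ → u₂ ≥ u₃ → u₃ ≥ u₄ →
      u₁ ∈ Set.Ico m M → u₂ ∈ Set.Ico m M → u₃ ∈ Set.Ico m M → u₄ ∈ Set.Ico m M →
      u₁ + u₂ + u₃ + u₄ = 2 * π →
      (F u₁ + F u₂ + F u₃ + F u₄ ≤ 3 * F m + F U ∧
        (F u₁ + F u₂ + F u₃ + F u₄ = 3 * F m + F U ↔
          (u₁, u₂, u₃, u₄) = (U, m, m, m))) := by
  have hmM : m < M := by linarith
  have hUS : U ∈ Set.Ico m M := ⟨by linarith, by linarith⟩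
  refine ⟨hUS, ?_⟩
  intro u₁ u₂ u₃ u₄ h12 h23 h34 hu₁ hu₂ hu₃ hu₄ hsum
  have hmS : m ∈ Set.Ico m M := ⟨le_refl m, hmM⟩
  obtain ⟨hm1, hM1⟩ := hu₁
  obtain ⟨hm2, _⟩ := hu₂
  obtain ⟨hm3, _⟩ := hu₃
  obtain ⟨hm4, _⟩ := hu₄
  set v : ℝ := u₁ + u₂ - m with hv
  set w : ℝ := 2 * π - u₄ - 2 * m with hw
  have hvS : v ∈ Set.Ico m M := ⟨by linarith, by linarith⟩
  have hwS : w ∈ Set.Ico m M := ⟨by linarith, by linarith⟩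
  have step1 := key_transfer hF hmS hvS hm2 h12 (by linarith) (by ring)
  have step2 := key_transfer (b := v) hF hmS hwS hm3 (by linarith)
    (by simp only [hv, hw]; linarith) (by simp only [hv, hw]; linarith)
  have step3 := key_transfer (b := w) hF hmS hUS hm4 (by simp only [hw]; linarith)
    (by simp only [hw]; linarith) (by simp only [hw, hU]; ring)
  refine ⟨by linarith [step1.1, step2.1, step3.1], ?_, ?_⟩
  · intro heq
    have e1 : F u₂ + F u₁ = F m + F v := by linarith [step1.1, step2.1, step3.1]
    have e2 : F u₃ + F v = F m + F w := by linarith [step1.1, step2.1, step3.1]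
    have e3 : F u₄ + F w = F m + F U := by linarith [step1.1, step2.1, step3.1]
    have q2 : u₂ = m := step1.2 e1
    have q3 : u₃ = m := step2.2 e2
    have q4 : u₄ = m := step3.2 e3
    have q1 : u₁ = U := by rw [hU]; linarith
    simp only [Prod.mk.injEq]
    exact ⟨q1, q2, q3, q4⟩
  · intro heq
    simp only [Prod.mk.injEq] at heq
    obtain ⟨e1, e2, e3, e4⟩ := heq
    rw [e1, e2, e3, e4]; ring
end

section
/- Let 0 < a < 1/6 and define s₋(a) = (1 − 2a − 2a² − √((2a+1)(1−6a)))/2. Then s₋(a) > 3a². -/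
/-! Since `1 - 2a - 8a² > 0` for `0 < a < 1/6`, the claim `√((2a+1)(1-6a)) < 1 - 2a - 8a²` may be
squared, and the difference of the squares is `32a³ + 64a⁴ > 0`. -/

lemma sq_sub_mul_eq (a : ℝ) :
    (1 - 2 * a - 8 * a ^ 2) ^ 2 - (2 * a + 1) * (1 - 6 * a) = 32 * a ^ 3 + 64 * a ^ 4 := by
  ring

lemma sqrt_lt_one_sub_two_mul_sub_eight_mul_sq (a : ℝ) (ha : 0 < a) (ha' : a < 1 / 6) :
    Real.sqrt ((2 * a + 1) * (1 - 6 * a)) < 1 - 2 * a - 8 * a ^ 2 := by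
  have hpos : 0 < 1 - 2 * a - 8 * a ^ 2 := by nlinarith
  rw [Real.sqrt_lt' hpos]
  linarith [sq_sub_mul_eq a, pow_pos ha 3, pow_pos ha 4]

theorem stmt_14 (a : ℝ) (ha : 0 < a) (ha' : a < 1 / 6) :
    3 * a ^ 2 <
      (1 - 2 * a - 2 * a ^ 2 - Real.sqrt ((2 * a + 1) * (1 - 6 * a))) / 2 := by
  linarith [sqrt_lt_one_sub_two_mul_sub_eight_mul_sq a ha ha']
end

section
/- Let a,b ∈ ℝ with a > 0, 0 < a < 1, b > 0, and b² > 3a². Let m = arctan(b/a) and θ = arctan(b/(1−a)). Then 3m > π + θ if and only if N(a,b) := 4a³ − 3a² − 4ab² + b² > 0. -/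
open Real

theorem stmt_15 (a b : ℝ) (ha : 0 < a) (ha1 : a < 1) (hb : 0 < b)
    (hb2 : 3 * a ^ 2 < b ^ 2) :
    3 * Real.arctan (b / a) > π + Real.arctan (b / (1 - a)) ↔
      0 < 4 * a ^ 3 - 3 * a ^ 2 - 4 * a * b ^ 2 + b ^ 2 := by
  have hpi := Real.pi_pos
  have h1a : 0 < 1 - a := by linarith
  set t : ℝ := b / a with htdef
  set y : ℝ := b / (1 - a) with hydef
  have ht3 : Real.sqrt 3 < t := by
    have hb' : Real.sqrt 3 * a < b := by
      nlinarith [Real.sq_sqrt (by norm_num : (0:ℝ) ≤ 3), Real.sqrt_nonneg 3]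
    rw [htdef, lt_div_iff₀ ha]; linarith
  have ht0 : 0 < t := lt_of_le_of_lt (Real.sqrt_nonneg 3) ht3
  have htsq : 3 < t ^ 2 := by
    have h1 : Real.sqrt 3 * Real.sqrt 3 < t * t :=
      mul_lt_mul' ht3.le ht3 (Real.sqrt_nonneg 3) ht0
    rw [Real.mul_self_sqrt (by norm_num : (0:ℝ) ≤ 3)] at h1
    nlinarith
  set m : ℝ := Real.arctan t with hmdef
  have hm1 : π / 3 < m := by
    have := Real.arctan_strictMono ht3
    rwa [← Real.tan_pi_div_three, Real.arctan_tan (by linarith) (by linarith)] at this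
  have hm2 : m < π / 2 := Real.arctan_lt_pi_div_two t
  set r : ℝ := Real.sqrt (1 + t ^ 2) with hrdef
  have hc : Real.cos m = 1 / r := Real.cos_arctan t
  have hs : Real.sin m = t / r := Real.sin_arctan t
  have hr0 : (0:ℝ) < r := Real.sqrt_pos.2 (by positivity)
  have hr2 : r ^ 2 = 1 + t ^ 2 := Real.sq_sqrt (by positivity)
  have hrne : r ≠ 0 := ne_of_gt hr0
  have hdneg : 1 - 3 * t ^ 2 < 0 := by nlinarith
  have hdne : 1 - 3 * t ^ 2 ≠ 0 := ne_of_lt hdneg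
  have hsin3 : Real.sin (3 * m) = (3 * t - t ^ 3) / r ^ 3 := by
    have h : (3 * t - t ^ 3) = 3 * t * r ^ 2 - 4 * t ^ 3 := by rw [hr2]; ring
    rw [Real.sin_three_mul, hs, h]; field_simp
  have hcos3 : Real.cos (3 * m) = (1 - 3 * t ^ 2) / r ^ 3 := by
    have h : (1 - 3 * t ^ 2) = 4 - 3 * r ^ 2 := by rw [hr2]; ring
    rw [Real.cos_three_mul, hc, h]; field_simp
  have htan3 : Real.tan (3 * m) = (3 * t - t ^ 3) / (1 - 3 * t ^ 2) := by
    rw [Real.tan_eq_sin_div_cos, hsin3, hcos3]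
    field_simp
  set X : ℝ := (3 * t - t ^ 3) / (1 - 3 * t ^ 2) with hXdef
  have harc : Real.arctan X = 3 * m - π := by
    have h1 : -(π / 2) < 3 * m - π := by linarith
    have h2 : 3 * m - π < π / 2 := by linarith
    have h3 : Real.tan (3 * m - π) = X := by
      rw [Real.tan_periodic.sub_eq, htan3]
    rw [← h3, Real.arctan_tan h1 h2]
  have hiff1 : 3 * m > π + Real.arctan y ↔ y < X := by
    constructor
    · intro h
      have : Real.arctan y < Real.arctan X := by rw [harc]; linarith
      exact Real.arctan_strictMono.lt_iff_lt.1 this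
    · intro h
      have := Real.arctan_strictMono h
      rw [harc] at this; linarith
  rw [hiff1, hXdef, lt_div_iff_of_neg hdneg]
  have hq : 0 < b / (a ^ 3 * (1 - a)) := by positivity
  have key : y * (1 - 3 * t ^ 2) - (3 * t - t ^ 3) =
      (4 * a ^ 3 - 3 * a ^ 2 - 4 * a * b ^ 2 + b ^ 2) * (b / (a ^ 3 * (1 - a))) := by
    rw [htdef, hydef]
    field_simp
    ring
  constructor
  · intro h
    have hpos : 0 < (4 * a ^ 3 - 3 * a ^ 2 - 4 * a * b ^ 2 + b ^ 2) *
        (b / (a ^ 3 * (1 - a))) := by rw [← key]; linarith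
    nlinarith [hpos, hq]
  · intro h
    linarith [key, mul_pos h hq]
end

section
/- Let λ = a + ib with b ≠ 0 and λ³ ≠ 1, and set α = (λ⁴ − 1)/(λ³ − 1). Then Im(α) = b·|λ−1|²·G(a,b) / |λ³ − 1|², where G(a,b) = (b² + a² + a)² + 2a² − b². In particular, α is real if and only if G(a,b) = 0. -/
open Complex

theorem stmt_18 (a b : ℝ) (hb : b ≠ 0) (lam : ℂ) (hlam : lam = Complex.mk a b)
    (hcube : lam ^ 3 ≠ 1) :
    ((lam ^ 4 - 1) / (lam ^ 3 - 1)).im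
        = b * ‖lam - 1‖ ^ 2 *
            ((b ^ 2 + a ^ 2 + a) ^ 2 + 2 * a ^ 2 - b ^ 2) /
          ‖lam ^ 3 - 1‖ ^ 2 ∧
    (((lam ^ 4 - 1) / (lam ^ 3 - 1)).im = 0 ↔
      (b ^ 2 + a ^ 2 + a) ^ 2 + 2 * a ^ 2 - b ^ 2 = 0) := by
  have hq : lam ^ 3 - 1 ≠ 0 := sub_ne_zero.mpr hcube
  have hns : Complex.normSq (lam ^ 3 - 1) ≠ 0 := by
    simpa [Complex.normSq_eq_zero] using hq
  have habs3 : ‖lam ^ 3 - 1‖ ^ 2 = Complex.normSq (lam ^ 3 - 1) := by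
    rw [Complex.sq_norm]
  have habs1 : ‖lam - 1‖ ^ 2 = Complex.normSq (lam - 1) := by
    rw [Complex.sq_norm]
  have hre : lam.re = a := by rw [hlam]
  have him : lam.im = b := by rw [hlam]
  have key : ((lam ^ 4 - 1) / (lam ^ 3 - 1)).im
      = b * Complex.normSq (lam - 1) *
          ((b ^ 2 + a ^ 2 + a) ^ 2 + 2 * a ^ 2 - b ^ 2) /
        Complex.normSq (lam ^ 3 - 1) := by
    rw [Complex.div_im, div_sub_div_same]
    congr 1
    simp only [Complex.normSq_apply, Complex.sub_re, Complex.sub_im, Complex.one_re,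
      Complex.one_im, pow_succ, pow_zero, one_mul, Complex.mul_re, Complex.mul_im, hre, him]
    ring
  rw [habs1, habs3, key]
  refine ⟨rfl, ?_⟩
  rw [div_eq_zero_iff]
  have h1 : lam - 1 ≠ 0 := by
    intro h
    apply hb
    have := congrArg Complex.im h
    simpa [him] using this
  have hns1 : Complex.normSq (lam - 1) ≠ 0 := by simpa [Complex.normSq_eq_zero] using h1
  constructor
  · rintro (h | h)
    · rcases mul_eq_zero.mp h with h | h
      · rcases mul_eq_zero.mp h with h | h
        · exact absurd h hb
        · exact absurd h hns1
      · exact h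
    · exact absurd h hns
  · intro h
    left; rw [h, mul_zero]
end
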